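/- Let n ≥ 1 and let C^{ij}_k (1 ≤ i,j,k ≤ n) be real constants, antisymmetric in (i,j), satisfying the Jacobi identity Σ_l (C^{ij}_l C^{lk}_m + C^{jk}_l C^{li}_m + C^{ki}_l C^{lj}_m) = 0 for all i,j,k,m (i.e. C are the structure constants of a Lie algebra). Let Ω : ℝ → M_n(ℝ) be a smooth map such that for every h ∈ ℝ the matrix Ω(h) is antisymmetric and satisfies the cocycle condition Σ_l (C^{jk}_l Ω^{il}(h) + C^{ki}_l Ω^{jl}(h) + C^{ij}_l Ω^{kl}(h)) = 0 for all i,j,k. For smooth functions f, g : ℝ × ℝⁿ → ℝ define {f,g}(h,v) := Σ_{i,j} (Ω^{ij}(h) + Σ_k C^{ij}_k v_k) · ∂f/∂v_i(h,v) · ∂g/∂v_j(h,v). Then the Jacobi identity {f,{g,k}} + {g,{k,f}} + {k,{f,g}} = 0 holds for all smooth f, g, k : ℝ × ℝⁿ → ℝ. In particular {h, v_j} = 0 for all j and {v_i, v_j} = Ω^{ij}(h) + Σ_k C^{ij}_k v_k. -/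

import Mathlib

open scoped BigOperators
open Matrix

/-- Partial derivative ∂f/∂v_i of a function on ℝ × ℝⁿ (in the last n coordinates). -/
noncomputable def pdv {n : ℕ} (i : Fin n) (f : ℝ × (Fin n → ℝ) → ℝ)
    (p : ℝ × (Fin n → ℝ)) : ℝ :=
  fderiv ℝ f p (0, Pi.single i 1)

/-- The bracket {f,g}(h,v) = Σ_{i,j} (Ω^{ij}(h) + Σ_k C^{ij}_k v_k) ∂f/∂v_i ∂g/∂v_j. -/
noncomputable def pbracketN {n : ℕ} (C : Fin n → Fin n → Fin n → ℝ)
    (Ω : ℝ → Matrix (Fin n) (Fin n) ℝ) (f g : ℝ × (Fin n → ℝ) → ℝ)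
    (p : ℝ × (Fin n → ℝ)) : ℝ :=
  ∑ i, ∑ j, (Ω p.1 i j + ∑ k, C i j k * p.2 k) * pdv i f p * pdv j g p

section Auxiliary

variable {n : ℕ}

lemma pdv_smooth' (i : Fin n) {f : ℝ × (Fin n → ℝ) → ℝ} (hf : ContDiff ℝ (⊤ : ℕ∞) f) :
    ContDiff ℝ (⊤ : ℕ∞) (pdv i f) :=
  (hf.fderiv_right (by simp)).clm_apply contDiff_const

lemma pdv_sum' {ι : Type*} (s : Finset ι) (a : Fin n) (F : ι → ℝ × (Fin n → ℝ) → ℝ)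
    (p : ℝ × (Fin n → ℝ)) (hF : ∀ i ∈ s, DifferentiableAt ℝ (F i) p) :
    pdv a (fun q => ∑ i ∈ s, F i q) p = ∑ i ∈ s, pdv a (F i) p := by
  unfold pdv
  rw [fderiv_fun_sum hF]
  simp

lemma pdv_mul' (a : Fin n) {f g : ℝ × (Fin n → ℝ) → ℝ} (p : ℝ × (Fin n → ℝ))
    (hf : DifferentiableAt ℝ f p) (hg : DifferentiableAt ℝ g p) :
    pdv a (fun q => f q * g q) p = pdv a f p * g p + f p * pdv a g p := by
  unfold pdv
  rw [fderiv_fun_mul hf hg]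
  simp
  ring

lemma pdv_swap' {f : ℝ × (Fin n → ℝ) → ℝ} (hf : ContDiff ℝ (⊤ : ℕ∞) f) (a b : Fin n)
    (p : ℝ × (Fin n → ℝ)) : pdv a (pdv b f) p = pdv b (pdv a f) p := by
  have hd : DifferentiableAt ℝ (fderiv ℝ f) p :=
    ((hf.fderiv_right (m := 1) (WithTop.coe_le_coe.mpr le_top)).differentiable one_ne_zero).differentiableAt
  have hsym : IsSymmSndFDerivAt ℝ f p :=
    hf.contDiffAt.isSymmSndFDerivAt (by rw [minSmoothness_of_isRCLikeNormedField]; exact WithTop.coe_le_coe.mpr le_top)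
  unfold pdv
  rw [fderiv_clm_apply hd (differentiableAt_const _),
    fderiv_clm_apply hd (differentiableAt_const _)]
  simp only [fderiv_const, fderiv_const_apply, Pi.zero_apply, ContinuousLinearMap.comp_zero,
    ContinuousLinearMap.zero_apply, zero_add, ContinuousLinearMap.add_apply,
    ContinuousLinearMap.flip_apply]
  exact hsym.eq _ _

lemma pdv_fst' (a : Fin n) (p : ℝ × (Fin n → ℝ)) :
    pdv a (fun q : ℝ × (Fin n → ℝ) => q.1) p = 0 := by
  unfold pdv
  rw [fderiv_fst]
  simp

lemma pdv_coord' (a k : Fin n) (p : ℝ × (Fin n → ℝ)) :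
    pdv a (fun q : ℝ × (Fin n → ℝ) => q.2 k) p = (Pi.single a 1 : Fin n → ℝ) k := by
  unfold pdv
  have : (fun q : ℝ × (Fin n → ℝ) => q.2 k) =
      fun q : ℝ × (Fin n → ℝ) =>
        ((ContinuousLinearMap.proj k).comp
          (ContinuousLinearMap.snd ℝ ℝ (Fin n → ℝ))) q := rfl
  rw [this, ContinuousLinearMap.fderiv]
  simp

lemma pdv_omega' (Ω : ℝ → Matrix (Fin n) (Fin n) ℝ)
    (hΩsmooth : ∀ i j : Fin n, ContDiff ℝ (⊤ : ℕ∞) fun h : ℝ => Ω h i j)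
    (a i j : Fin n) (p : ℝ × (Fin n → ℝ)) :
    pdv a (fun q : ℝ × (Fin n → ℝ) => Ω q.1 i j) p = 0 := by
  unfold pdv
  have h1 : (fun q : ℝ × (Fin n → ℝ) => Ω q.1 i j) =
      (fun h : ℝ => Ω h i j) ∘ Prod.fst := rfl
  rw [h1, fderiv_comp p ((hΩsmooth i j).differentiable (by simp)).differentiableAt
    differentiableAt_fst]
  rw [fderiv_fst]
  simp

lemma smooth_coord' (k : Fin n) : ContDiff ℝ (⊤ : ℕ∞) (fun q : ℝ × (Fin n → ℝ) => q.2 k) :=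
  ((ContinuousLinearMap.proj k).comp (ContinuousLinearMap.snd ℝ ℝ (Fin n → ℝ))).contDiff

lemma smooth_P' (C : Fin n → Fin n → Fin n → ℝ) (Ω : ℝ → Matrix (Fin n) (Fin n) ℝ)
    (hΩsmooth : ∀ i j : Fin n, ContDiff ℝ (⊤ : ℕ∞) fun h : ℝ => Ω h i j) (i j : Fin n) :
    ContDiff ℝ (⊤ : ℕ∞) (fun q : ℝ × (Fin n → ℝ) => Ω q.1 i j + ∑ k, C i j k * q.2 k) := by
  refine ((hΩsmooth i j).comp contDiff_fst).add ?_
  exact ContDiff.sum fun k _ => contDiff_const.mul (smooth_coord' k)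

lemma pdv_P' (C : Fin n → Fin n → Fin n → ℝ) (Ω : ℝ → Matrix (Fin n) (Fin n) ℝ)
    (hΩsmooth : ∀ i j : Fin n, ContDiff ℝ (⊤ : ℕ∞) fun h : ℝ => Ω h i j)
    (a i j : Fin n) (p : ℝ × (Fin n → ℝ)) :
    pdv a (fun q : ℝ × (Fin n → ℝ) => Ω q.1 i j + ∑ k, C i j k * q.2 k) p = C i j a := by
  unfold pdv
  have hd1 : DifferentiableAt ℝ (fun q : ℝ × (Fin n → ℝ) => Ω q.1 i j) p :=
    (((hΩsmooth i j).comp contDiff_fst).differentiable (by simp)).differentiableAt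
  have hd2 : DifferentiableAt ℝ (fun q : ℝ × (Fin n → ℝ) => ∑ k, C i j k * q.2 k) p := by
    exact ((ContDiff.sum fun k _ => contDiff_const.mul (smooth_coord' k) :
      ContDiff ℝ (⊤ : ℕ∞) _).differentiable (by simp)).differentiableAt
  rw [fderiv_fun_add hd1 hd2]
  have h0 := pdv_omega' Ω hΩsmooth a i j p
  unfold pdv at h0
  rw [ContinuousLinearMap.add_apply, h0, zero_add]
  have hsum : ∀ k : Fin n, DifferentiableAt ℝ
      (fun q : ℝ × (Fin n → ℝ) => C i j k * q.2 k) p := fun k =>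
    ((contDiff_const.mul (smooth_coord' k) : ContDiff ℝ (⊤ : ℕ∞) _).differentiable
      (by simp)).differentiableAt
  rw [fderiv_fun_sum fun k _ => hsum k]
  rw [ContinuousLinearMap.sum_apply]
  have : ∀ k : Fin n, (fderiv ℝ (fun q : ℝ × (Fin n → ℝ) => C i j k * q.2 k) p)
      ((0:ℝ), Pi.single a 1) = C i j k * (Pi.single a 1 : Fin n → ℝ) k := by
    intro k
    rw [fderiv_const_mul (((smooth_coord' k).differentiable (by simp)).differentiableAt)]
    have h2 := pdv_coord' a k p
    unfold pdv at h2
    simp [h2]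
  simp only [this]
  simp [Pi.single_apply]

/-- quadruple sum abbreviation -/
noncomputable def S4 {n : ℕ} (T : Fin n → Fin n → Fin n → Fin n → ℝ) : ℝ :=
  ∑ a, ∑ b, ∑ i, ∑ j, T a b i j

lemma S4_add (T U : Fin n → Fin n → Fin n → Fin n → ℝ) :
    S4 (fun a b i j => T a b i j + U a b i j) = S4 T + S4 U := by
  simp [S4, Finset.sum_add_distrib]

lemma S4_eq_prod (T : Fin n → Fin n → Fin n → Fin n → ℝ) :
    S4 T = ∑ x : Fin n × Fin n × Fin n × Fin n, T x.1 x.2.1 x.2.2.1 x.2.2.2 := by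
  simp [S4, Fintype.sum_prod_type]

lemma pairCancel (P : Fin n → Fin n → ℝ) (hP : ∀ i j, P j i = -P i j)
    (X2 : Fin n → Fin n → ℝ) (hX2 : ∀ i j, X2 i j = X2 j i) (Y Z : Fin n → ℝ) :
    S4 (fun a b i j => P a b * P i j * (Y a * X2 b i * Z j))
      + S4 (fun a b i j => P a b * P i j * (Z a * Y i * X2 b j)) = 0 := by
  let e : (Fin n × Fin n × Fin n × Fin n) ≃ (Fin n × Fin n × Fin n × Fin n) :=
    ⟨fun x => (x.2.2.2, x.2.2.1, x.1, x.2.1), fun y => (y.2.2.1, y.2.2.2, y.2.1, y.1),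
      fun x => rfl, fun y => rfl⟩
  have h2 : S4 (fun a b i j => P a b * P i j * (Z a * Y i * X2 b j))
      = S4 (fun a b i j => -(P a b * P i j * (Y a * X2 b i * Z j))) := by
    rw [S4_eq_prod, S4_eq_prod,
      ← Equiv.sum_comp e (fun x : Fin n × Fin n × Fin n × Fin n =>
        P x.1 x.2.1 * P x.2.2.1 x.2.2.2 * (Z x.1 * Y x.2.2.1 * X2 x.2.1 x.2.2.2))]
    refine Finset.sum_congr rfl fun x _ => ?_
    show P x.2.2.2 x.2.2.1 * P x.1 x.2.1 * (Z x.2.2.2 * Y x.1 * X2 x.2.2.1 x.2.1)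
        = -(P x.1 x.2.1 * P x.2.2.1 x.2.2.2 * (Y x.1 * X2 x.2.1 x.2.2.1 * Z x.2.2.2))
    rw [hP x.2.2.1 x.2.2.2, hX2 x.2.2.1 x.2.1]
    ring
  rw [h2, ← S4_add]
  simp [S4]

lemma claim1 (P : Fin n → Fin n → ℝ) (C : Fin n → Fin n → Fin n → ℝ)
    (hPC : ∀ a i j : Fin n,
      ∑ l, (P a l * C i j l + P i l * C j a l + P j l * C a i l) = 0)
    (F G K : Fin n → ℝ) :
    S4 (fun a b i j => P a b * C i j b * (F a * G i * K j))
      + S4 (fun a b i j => P a b * C i j b * (G a * K i * F j))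
      + S4 (fun a b i j => P a b * C i j b * (K a * F i * G j)) = 0 := by
  let e2 : (Fin n × Fin n × Fin n × Fin n) ≃ (Fin n × Fin n × Fin n × Fin n) :=
    ⟨fun x => (x.2.2.1, x.2.1, x.2.2.2, x.1), fun y => (y.2.2.2, y.2.1, y.1, y.2.2.1),
      fun x => rfl, fun y => rfl⟩
  let e3 : (Fin n × Fin n × Fin n × Fin n) ≃ (Fin n × Fin n × Fin n × Fin n) :=
    ⟨fun x => (x.2.2.2, x.2.1, x.1, x.2.2.1), fun y => (y.2.2.1, y.2.1, y.2.2.2, y.1),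
      fun x => rfl, fun y => rfl⟩
  have h2 : S4 (fun a b i j => P a b * C i j b * (G a * K i * F j))
      = S4 (fun a b i j => P i b * C j a b * (F a * G i * K j)) := by
    rw [S4_eq_prod, S4_eq_prod,
      ← Equiv.sum_comp e2 (fun x : Fin n × Fin n × Fin n × Fin n =>
        P x.1 x.2.1 * C x.2.2.1 x.2.2.2 x.2.1 * (G x.1 * K x.2.2.1 * F x.2.2.2))]
    refine Finset.sum_congr rfl fun x _ => ?_
    show P x.2.2.1 x.2.1 * C x.2.2.2 x.1 x.2.1 * (G x.2.2.1 * K x.2.2.2 * F x.1)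
        = P x.2.2.1 x.2.1 * C x.2.2.2 x.1 x.2.1 * (F x.1 * G x.2.2.1 * K x.2.2.2)
    ring
  have h3 : S4 (fun a b i j => P a b * C i j b * (K a * F i * G j))
      = S4 (fun a b i j => P j b * C a i b * (F a * G i * K j)) := by
    rw [S4_eq_prod, S4_eq_prod,
      ← Equiv.sum_comp e3 (fun x : Fin n × Fin n × Fin n × Fin n =>
        P x.1 x.2.1 * C x.2.2.1 x.2.2.2 x.2.1 * (K x.1 * F x.2.2.1 * G x.2.2.2))]
    refine Finset.sum_congr rfl fun x _ => ?_
    show P x.2.2.2 x.2.1 * C x.1 x.2.2.1 x.2.1 * (K x.2.2.2 * F x.1 * G x.2.2.1)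
        = P x.2.2.2 x.2.1 * C x.1 x.2.2.1 x.2.1 * (F x.1 * G x.2.2.1 * K x.2.2.2)
    ring
  rw [h2, h3, ← S4_add, ← S4_add]
  unfold S4
  refine Finset.sum_eq_zero fun a _ => ?_
  rw [Finset.sum_comm]
  refine Finset.sum_eq_zero fun i _ => ?_
  rw [Finset.sum_comm]
  refine Finset.sum_eq_zero fun j _ => ?_
  have : ∀ b : Fin n,
      P a b * C i j b * (F a * G i * K j) + P i b * C j a b * (F a * G i * K j)
        + P j b * C a i b * (F a * G i * K j)
      = F a * G i * K j * (P a b * C i j b + P i b * C j a b + P j b * C a i b) :=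
    fun b => by ring
  rw [Finset.sum_congr rfl fun b _ => this b, ← Finset.mul_sum, hPC a i j, mul_zero]

lemma algCore (P : Fin n → Fin n → ℝ) (C : Fin n → Fin n → Fin n → ℝ)
    (hP : ∀ i j, P j i = -P i j)
    (hPC : ∀ a i j : Fin n,
      ∑ l, (P a l * C i j l + P i l * C j a l + P j l * C a i l) = 0)
    (F G K : Fin n → ℝ) (F2 G2 K2 : Fin n → Fin n → ℝ)
    (hF2 : ∀ i j, F2 i j = F2 j i) (hG2 : ∀ i j, G2 i j = G2 j i)
    (hK2 : ∀ i j, K2 i j = K2 j i) :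
    (∑ a, ∑ b, P a b * F a * (∑ i, ∑ j, (C i j b * (G i * K j)
        + P i j * (G2 b i * K j + G i * K2 b j))))
    + (∑ a, ∑ b, P a b * G a * (∑ i, ∑ j, (C i j b * (K i * F j)
        + P i j * (K2 b i * F j + K i * F2 b j))))
    + (∑ a, ∑ b, P a b * K a * (∑ i, ∑ j, (C i j b * (F i * G j)
        + P i j * (F2 b i * G j + F i * G2 b j)))) = 0 := by
  have hrow : ∀ (F G K : Fin n → ℝ) (G2 K2 : Fin n → Fin n → ℝ),
      (∑ a, ∑ b, P a b * F a * (∑ i, ∑ j, (C i j b * (G i * K j)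
          + P i j * (G2 b i * K j + G i * K2 b j))))
      = S4 (fun a b i j => P a b * C i j b * (F a * G i * K j))
        + S4 (fun a b i j => P a b * P i j * (F a * G2 b i * K j))
        + S4 (fun a b i j => P a b * P i j * (F a * G i * K2 b j)) := by
    intro F G K G2 K2
    rw [← S4_add, ← S4_add]
    unfold S4
    refine Finset.sum_congr rfl fun a _ => Finset.sum_congr rfl fun b _ => ?_
    rw [Finset.mul_sum]
    refine Finset.sum_congr rfl fun i _ => ?_
    rw [Finset.mul_sum]
    refine Finset.sum_congr rfl fun j _ => ?_
    ring
  rw [hrow F G K G2 K2, hrow G K F K2 F2, hrow K F G F2 G2]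
  have c1 := claim1 P C hPC F G K
  have p1 := pairCancel P hP G2 hG2 F K
  have p2 := pairCancel P hP K2 hK2 G F
  have p3 := pairCancel P hP F2 hF2 K G
  linarith [c1, p1, p2, p3]

lemma bracket_pdv (C : Fin n → Fin n → Fin n → ℝ) (Ω : ℝ → Matrix (Fin n) (Fin n) ℝ)
    (hΩsmooth : ∀ i j : Fin n, ContDiff ℝ (⊤ : ℕ∞) fun h : ℝ => Ω h i j)
    {g k : ℝ × (Fin n → ℝ) → ℝ} (hg : ContDiff ℝ (⊤ : ℕ∞) g) (hk : ContDiff ℝ (⊤ : ℕ∞) k)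
    (a : Fin n) (p : ℝ × (Fin n → ℝ)) :
    pdv a (pbracketN C Ω g k) p
      = ∑ i, ∑ j, (C i j a * (pdv i g p * pdv j k p)
          + (Ω p.1 i j + ∑ m, C i j m * p.2 m)
            * (pdv a (pdv i g) p * pdv j k p + pdv i g p * pdv a (pdv j k) p)) := by
  have hPs : ∀ i j : Fin n,
      ContDiff ℝ (⊤ : ℕ∞) (fun q : ℝ × (Fin n → ℝ) => Ω q.1 i j + ∑ m, C i j m * q.2 m) :=
    smooth_P' C Ω hΩsmooth
  have hterm : ∀ i j : Fin n, ContDiff ℝ (⊤ : ℕ∞)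
      (fun q : ℝ × (Fin n → ℝ) =>
        (Ω q.1 i j + ∑ m, C i j m * q.2 m) * pdv i g q * pdv j k q) :=
    fun i j => ((hPs i j).mul (pdv_smooth' i hg)).mul (pdv_smooth' j hk)
  have hb : pbracketN C Ω g k = fun q => ∑ i, ∑ j,
      (Ω q.1 i j + ∑ m, C i j m * q.2 m) * pdv i g q * pdv j k q := rfl
  rw [hb, pdv_sum' Finset.univ a _ p (fun i _ =>
    (ContDiff.sum (fun j _ => hterm i j) |>.differentiable (by simp)).differentiableAt)]
  refine Finset.sum_congr rfl fun i _ => ?_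
  rw [pdv_sum' Finset.univ a _ p (fun j _ =>
    ((hterm i j).differentiable (by simp)).differentiableAt)]
  refine Finset.sum_congr rfl fun j _ => ?_
  have d1 : DifferentiableAt ℝ
      (fun q : ℝ × (Fin n → ℝ) =>
        (Ω q.1 i j + ∑ m, C i j m * q.2 m) * pdv i g q) p :=
    (((hPs i j).mul (pdv_smooth' i hg)).differentiable (by simp)).differentiableAt
  have d2 : DifferentiableAt ℝ (pdv j k) p :=
    ((pdv_smooth' j hk).differentiable (by simp)).differentiableAt
  have d3 : DifferentiableAt ℝ
      (fun q : ℝ × (Fin n → ℝ) => Ω q.1 i j + ∑ m, C i j m * q.2 m) p :=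
    ((hPs i j).differentiable (by simp)).differentiableAt
  have d4 : DifferentiableAt ℝ (pdv i g) p :=
    ((pdv_smooth' i hg).differentiable (by simp)).differentiableAt
  rw [show (fun q : ℝ × (Fin n → ℝ) =>
      (Ω q.1 i j + ∑ m, C i j m * q.2 m) * pdv i g q * pdv j k q)
    = fun q => ((Ω q.1 i j + ∑ m, C i j m * q.2 m) * pdv i g q) * pdv j k q from rfl,
    pdv_mul' a p d1 d2, pdv_mul' a p d3 d4, pdv_P' C Ω hΩsmooth a i j p]
  ring

end Auxiliary

theorem statement7 (n : ℕ) (hn : 1 ≤ n)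
    (C : Fin n → Fin n → Fin n → ℝ)
    (hCanti : ∀ i j k : Fin n, C i j k = -C j i k)
    (hCjacobi : ∀ i j k m : Fin n,
      ∑ l, (C i j l * C l k m + C j k l * C l i m + C k i l * C l j m) = 0)
    (Ω : ℝ → Matrix (Fin n) (Fin n) ℝ)
    (hΩsmooth : ∀ i j : Fin n, ContDiff ℝ (⊤ : ℕ∞) fun h : ℝ => Ω h i j)
    (hΩanti : ∀ h : ℝ, (Ω h)ᵀ = -Ω h)
    (hΩcocycle : ∀ (h : ℝ) (i j k : Fin n),
      ∑ l, (C j k l * Ω h i l + C k i l * Ω h j l + C i j l * Ω h k l) = 0) :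
    (∀ f g k : ℝ × (Fin n → ℝ) → ℝ,
      ContDiff ℝ (⊤ : ℕ∞) f → ContDiff ℝ (⊤ : ℕ∞) g → ContDiff ℝ (⊤ : ℕ∞) k →
      ∀ p : ℝ × (Fin n → ℝ),
        pbracketN C Ω f (pbracketN C Ω g k) p + pbracketN C Ω g (pbracketN C Ω k f) p
          + pbracketN C Ω k (pbracketN C Ω f g) p = 0) ∧
    (∀ (j : Fin n) (p : ℝ × (Fin n → ℝ)),
      pbracketN C Ω (fun q => q.1) (fun q => q.2 j) p = 0) ∧
    (∀ (i j : Fin n) (p : ℝ × (Fin n → ℝ)),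
      pbracketN C Ω (fun q => q.2 i) (fun q => q.2 j) p
        = Ω p.1 i j + ∑ k, C i j k * p.2 k) := by
  refine ⟨?_, ?_, ?_⟩
  · intro f g k hf hg hk p
    have hP : ∀ i j : Fin n, (Ω p.1 j i + ∑ m, C j i m * p.2 m)
        = -(Ω p.1 i j + ∑ m, C i j m * p.2 m) := by
      intro i j
      have h := congrFun (congrFun (hΩanti p.1) i) j
      simp only [Matrix.transpose_apply, Matrix.neg_apply] at h
      have h2 : ∑ m, C j i m * p.2 m = -∑ m, C i j m * p.2 m := by
        rw [← Finset.sum_neg_distrib]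
        exact Finset.sum_congr rfl fun m _ => by rw [hCanti j i m]; ring
      rw [h, h2]
      ring
    have hPC : ∀ a i j : Fin n,
        ∑ l, ((Ω p.1 a l + ∑ m, C a l m * p.2 m) * C i j l
          + (Ω p.1 i l + ∑ m, C i l m * p.2 m) * C j a l
          + (Ω p.1 j l + ∑ m, C j l m * p.2 m) * C a i l) = 0 := by
      intro a i j
      have hsplit : ∀ l : Fin n,
          (Ω p.1 a l + ∑ m, C a l m * p.2 m) * C i j l
            + (Ω p.1 i l + ∑ m, C i l m * p.2 m) * C j a l
            + (Ω p.1 j l + ∑ m, C j l m * p.2 m) * C a i l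
          = (C i j l * Ω p.1 a l + C j a l * Ω p.1 i l + C a i l * Ω p.1 j l)
            + ∑ m, (C a l m * p.2 m * C i j l + C i l m * p.2 m * C j a l
                + C j l m * p.2 m * C a i l) := by
        intro l
        rw [Finset.sum_add_distrib, Finset.sum_add_distrib, ← Finset.sum_mul,
          ← Finset.sum_mul, ← Finset.sum_mul]
        ring
      rw [Finset.sum_congr rfl fun l _ => hsplit l, Finset.sum_add_distrib,
        hΩcocycle p.1 a i j, zero_add, Finset.sum_comm]
      refine Finset.sum_eq_zero fun m _ => ?_
      have hinner : ∀ l : Fin n,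
          C a l m * p.2 m * C i j l + C i l m * p.2 m * C j a l
            + C j l m * p.2 m * C a i l
          = -(p.2 m * (C i j l * C l a m + C j a l * C l i m + C a i l * C l j m)) := by
        intro l
        rw [hCanti a l m, hCanti i l m, hCanti j l m]
        ring
      rw [Finset.sum_congr rfl fun l _ => hinner l, Finset.sum_neg_distrib,
        ← Finset.mul_sum, hCjacobi i j a m, mul_zero, neg_zero]
    have h1 := fun b => bracket_pdv C Ω hΩsmooth hg hk b p
    have h2 := fun b => bracket_pdv C Ω hΩsmooth hk hf b p
    have h3 := fun b => bracket_pdv C Ω hΩsmooth hf hg b p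
    have e1 : pbracketN C Ω f (pbracketN C Ω g k) p
        = ∑ a, ∑ b, (Ω p.1 a b + ∑ m, C a b m * p.2 m) * pdv a f p
            * (∑ i, ∑ j, (C i j b * (pdv i g p * pdv j k p)
              + (Ω p.1 i j + ∑ m, C i j m * p.2 m) * (pdv b (pdv i g) p * pdv j k p
                + pdv i g p * pdv b (pdv j k) p))) := by
      rw [show pbracketN C Ω f (pbracketN C Ω g k) p
          = ∑ a, ∑ b, (Ω p.1 a b + ∑ m, C a b m * p.2 m) * pdv a f p
              * pdv b (pbracketN C Ω g k) p from rfl]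
      exact Finset.sum_congr rfl fun a _ => Finset.sum_congr rfl fun b _ => by
        rw [h1 b]
    have e2 : pbracketN C Ω g (pbracketN C Ω k f) p
        = ∑ a, ∑ b, (Ω p.1 a b + ∑ m, C a b m * p.2 m) * pdv a g p
            * (∑ i, ∑ j, (C i j b * (pdv i k p * pdv j f p)
              + (Ω p.1 i j + ∑ m, C i j m * p.2 m) * (pdv b (pdv i k) p * pdv j f p
                + pdv i k p * pdv b (pdv j f) p))) := by
      rw [show pbracketN C Ω g (pbracketN C Ω k f) p
          = ∑ a, ∑ b, (Ω p.1 a b + ∑ m, C a b m * p.2 m) * pdv a g p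
              * pdv b (pbracketN C Ω k f) p from rfl]
      exact Finset.sum_congr rfl fun a _ => Finset.sum_congr rfl fun b _ => by
        rw [h2 b]
    have e3 : pbracketN C Ω k (pbracketN C Ω f g) p
        = ∑ a, ∑ b, (Ω p.1 a b + ∑ m, C a b m * p.2 m) * pdv a k p
            * (∑ i, ∑ j, (C i j b * (pdv i f p * pdv j g p)
              + (Ω p.1 i j + ∑ m, C i j m * p.2 m) * (pdv b (pdv i f) p * pdv j g p
                + pdv i f p * pdv b (pdv j g) p))) := by
      rw [show pbracketN C Ω k (pbracketN C Ω f g) p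
          = ∑ a, ∑ b, (Ω p.1 a b + ∑ m, C a b m * p.2 m) * pdv a k p
              * pdv b (pbracketN C Ω f g) p from rfl]
      exact Finset.sum_congr rfl fun a _ => Finset.sum_congr rfl fun b _ => by
        rw [h3 b]
    rw [e1, e2, e3]
    exact algCore (fun i j => Ω p.1 i j + ∑ m, C i j m * p.2 m) C hP hPC
      (fun i => pdv i f p) (fun i => pdv i g p) (fun i => pdv i k p)
      (fun a b => pdv a (pdv b f) p) (fun a b => pdv a (pdv b g) p)
      (fun a b => pdv a (pdv b k) p)
      (fun a b => pdv_swap' hf a b p) (fun a b => pdv_swap' hg a b p)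
      (fun a b => pdv_swap' hk a b p)
  · intro j p
    unfold pbracketN
    refine Finset.sum_eq_zero fun a _ => Finset.sum_eq_zero fun b _ => ?_
    rw [pdv_fst' a p]
    ring
  · intro i j p
    unfold pbracketN
    have : ∀ a b : Fin n,
        (Ω p.1 a b + ∑ k, C a b k * p.2 k)
            * pdv a (fun q : ℝ × (Fin n → ℝ) => q.2 i) p
            * pdv b (fun q : ℝ × (Fin n → ℝ) => q.2 j) p
        = (Ω p.1 a b + ∑ k, C a b k * p.2 k)
            * (if i = a then (1:ℝ) else 0) * (if j = b then (1:ℝ) else 0) := by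
      intro a b
      rw [pdv_coord' a i p, pdv_coord' b j p]
      simp [Pi.single_apply]
    simp only [this]
    rw [Finset.sum_eq_single i, Finset.sum_eq_single j]
    · simp
    · intro c _ hc
      simp [if_neg (Ne.symm hc)]
    · intro h
      exact absurd (Finset.mem_univ j) h
    · intro b _ hb
      exact Finset.sum_eq_zero fun c _ => by simp [if_neg (Ne.symm hb)]
    · intro h
      exact absurd (Finset.mem_univ i) h
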